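/- arXiv:2012.11128 — 2 statements merged into one kernel-verified Lean document; each statement's English description precedes it below -/
import Mathlib

section
/- Let G be a directed graph with vertices s, t and hop constraint k. Let G' be the subgraph of G induced by the vertex set N = {u ∈ V(G) : sd(s,u) + sd(u,t) ≤ k}, where sd denotes shortest-path distance (number of edges). Then a path p is a simple s-t path in G of length at most k if and only if p is a simple s-t path in G' of length at most k. -/
variable {V : Type*}

/-- `p` is a (nonempty) directed path/walk from `s` to `t` in the graph with edge
relation `E`: consecutive vertices are joined by edges, it starts at `s` and ends at `t`. -/
def IsPath (E : V → V → Prop) (s t : V) (p : List V) : Prop :=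
  p.Chain' E ∧ p.head? = some s ∧ p.getLast? = some t

/-- A simple path: a path with no repeated vertices. -/
def IsSimplePath (E : V → V → Prop) (s t : V) (p : List V) : Prop :=
  IsPath E s t p ∧ p.Nodup

/-- The length (number of edges) of a path given as a vertex list. -/
def len (p : List V) : ℕ := p.length - 1

/-- Directed shortest-path distance (number of edges), `⊤` if unreachable. -/
noncomputable def sd (E : V → V → Prop) (u v : V) : ℕ∞ :=
  sInf {n : ℕ∞ | ∃ p : List V, IsPath E u v p ∧ (len p : ℕ∞) = n}

/-!
A vertex `v` on an `s`-`t` path `p` splits `p` into an `s`-`v` path and a `v`-`t` path, so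
`sd(s,v) + sd(v,t) ≤ len p`. Hence every vertex of an `s`-`t` path of length at most `k` lies in
`N`, and the path survives in the subgraph induced by `N`; the converse holds because that subgraph
only has edges of `G`.
-/

section Paths

variable {E E' : V → V → Prop} {s t v : V} {p : List V}

lemma IsPath.sd_le_len (hp : IsPath E s t p) : sd E s t ≤ len p :=
  sInf_le ⟨p, hp, rfl⟩

lemma IsPath.mono (h : ∀ a b, E a b → E' a b) (hp : IsPath E s t p) : IsPath E' s t p :=
  ⟨hp.1.imp h, hp.2⟩

lemma IsPath.restrict {C : V → Prop} (hp : IsPath E s t p) (hC : ∀ v ∈ p, C v) :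
    IsPath (fun a b => E a b ∧ C a ∧ C b) s t p :=
  ⟨hp.1.imp_of_mem_imp fun a b ha hb h => ⟨h, hC a ha, hC b hb⟩, hp.2⟩

lemma IsPath.split {l₁ l₂ : List V} (hp : IsPath E s t (l₁ ++ v :: l₂)) :
    IsPath E s v (l₁ ++ [v]) ∧ IsPath E v t (v :: l₂) := by
  obtain ⟨hchain, hhead, hlast⟩ := hp
  rw [List.Chain', List.isChain_split] at hchain
  refine ⟨⟨hchain.1, ?_, by simp⟩, ⟨hchain.2, rfl, ?_⟩⟩
  · cases l₁ <;> simpa using hhead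
  · rwa [List.getLast?_append_cons] at hlast

lemma IsPath.sd_add_sd_le_len (hp : IsPath E s t p) (hv : v ∈ p) :
    sd E s v + sd E v t ≤ len p := by
  obtain ⟨l₁, l₂, rfl⟩ := List.append_of_mem hv
  obtain ⟨hsv, hvt⟩ := hp.split
  calc sd E s v + sd E v t ≤ len (l₁ ++ [v]) + len (v :: l₂) :=
        add_le_add hsv.sd_le_len hvt.sd_le_len
    _ = len (l₁ ++ v :: l₂) := by
        simp only [len, List.length_append, List.length_cons, List.length_nil]
        norm_cast

end Paths

/-- enumeration on `G` equals enumeration on the subgraph induced by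
`N = {u | sd(s,u) + sd(u,t) ≤ k}`. -/
theorem induced_subgraph_preserves_st_k_paths (E : V → V → Prop) (s t : V) (k : ℕ)
    (p : List V) :
    (IsSimplePath E s t p ∧ len p ≤ k) ↔
      (IsSimplePath (fun a b => E a b ∧ sd E s a + sd E a t ≤ (k : ℕ∞) ∧
          sd E s b + sd E b t ≤ (k : ℕ∞)) s t p ∧
        (∀ v ∈ p, sd E s v + sd E v t ≤ (k : ℕ∞)) ∧ len p ≤ k) := by
  constructor
  · rintro ⟨⟨hp, hnodup⟩, hlen⟩
    have hN : ∀ v ∈ p, sd E s v + sd E v t ≤ (k : ℕ∞) := fun v hv =>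
      (hp.sd_add_sd_le_len hv).trans (by exact_mod_cast hlen)
    exact ⟨⟨hp.restrict hN, hnodup⟩, hN, hlen⟩
  · rintro ⟨⟨hp, hnodup⟩, -, hlen⟩
    exact ⟨⟨hp.mono fun _ _ h => h.1, hnodup⟩, hlen⟩
end

section
/- In the join framework, no s-t k-path is produced twice: two distinct pairs (p_l, p_r) and (p_l', p_r') joined at middle vertices m and m' respectively yield the same s-t path only if m = m', p_l = p_l' and p_r = p_r'. Hence the map from valid joinable pairs to s-t k-paths is injective. -/
variable {V : Type*}

/-- A valid joinable pair: a simple `s`-`m` path and a simple `m`-`t` path, disjoint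
except at `m`, whose concatenation has length at most `k` and has `m` as its middle
vertex (the `⌈(len+1)/2⌉`-th vertex). -/
def ValidPair (E : V → V → Prop) (s t : V) (k : ℕ) (m : V) (pl pr : List V) : Prop :=
  IsSimplePath E s m pl ∧ IsSimplePath E m t pr ∧
  (∀ x, x ∈ pl → x ∈ pr → x = m) ∧
  len (pl ++ pr.tail) ≤ k ∧
  (pl ++ pr.tail)[(len (pl ++ pr.tail) + 2) / 2 - 1]? = some m


namespace IsPath

variable {E : V → V → Prop} {s t : V} {p : List V}

theorem ne_nil (h : IsPath E s t p) : p ≠ [] := by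
  rintro rfl
  simp [IsPath] at h

theorem cons_tail (h : IsPath E s t p) : s :: p.tail = p := by
  obtain ⟨-, hs, -⟩ := h
  cases p with
  | nil => simp at hs
  | cons a l => simpa using hs.symm

theorem getElem?_length_sub_one (h : IsPath E s t p) : p[p.length - 1]? = some t := by
  rw [← List.getLast?_eq_getElem?]
  exact h.2.2

end IsPath

theorem List.Nodup.append_of_inter_cons_eq_head {α : Type*} {l₁ l₂ : List α} {a : α}
    (h₁ : l₁.Nodup) (h₂ : (a :: l₂).Nodup) (hinter : ∀ x ∈ l₁, x ∈ a :: l₂ → x = a) :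
    (l₁ ++ l₂).Nodup := by
  obtain ⟨ha, h₂⟩ := List.nodup_cons.mp h₂
  refine h₁.append h₂ fun x hx₁ hx₂ => ?_
  exact ha (hinter x hx₁ (List.mem_cons_of_mem a hx₂) ▸ hx₂)

namespace ValidPair

variable {E : V → V → Prop} {s t m : V} {k : ℕ} {pl pr : List V}

theorem nodup_join (h : ValidPair E s t k m pl pr) : (pl ++ pr.tail).Nodup := by
  obtain ⟨⟨-, hpl⟩, ⟨hpath, hpr⟩, hinter, -⟩ := h
  rw [← hpath.cons_tail] at hpr hinter
  exact List.Nodup.append_of_inter_cons_eq_head hpl hpr hinter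

/-- `m` sits in the join both at index `pl.length - 1` and at the middle index, and the join has
no repeated vertices. -/
theorem length_left (h : ValidPair E s t k m pl pr) :
    pl.length = (len (pl ++ pr.tail) + 2) / 2 := by
  have hpos := List.length_pos_iff.mpr h.1.1.ne_nil
  have hlast : (pl ++ pr.tail)[pl.length - 1]? = some m := by
    rw [List.getElem?_append_left (by omega)]
    exact h.1.1.getElem?_length_sub_one
  have hidx := (List.getElem?_inj (by simp only [List.length_append]; omega)
    h.nodup_join).mp (hlast.trans h.2.2.2.2.symm)
  omega

end ValidPair

/-- no duplicates in the join framework — two valid joinable pairs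
producing the same concatenated `s`-`t` path coincide. -/
theorem join_no_duplicates (E : V → V → Prop) (s t : V) (k : ℕ)
    (m m' : V) (pl pr pl' pr' : List V)
    (h : ValidPair E s t k m pl pr) (h' : ValidPair E s t k m' pl' pr')
    (heq : pl ++ pr.tail = pl' ++ pr'.tail) :
    m = m' ∧ pl = pl' ∧ pr = pr' := by
  have hlen : pl.length = pl'.length := by
    rw [h.length_left, h'.length_left, heq]
  obtain ⟨rfl, htail⟩ := List.append_inj heq hlen
  have hm : m = m' := Option.some_injective _ (h.1.1.2.2.symm.trans h'.1.1.2.2)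
  subst hm
  refine ⟨rfl, rfl, ?_⟩
  rw [← h.2.1.1.cons_tail, ← h'.2.1.1.cons_tail, htail]
end
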